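/- With the mechanism W(x,x) = λ, W(x,k+1) = 1 − λ (λ = (2^α−1)/(k−1)), and the unbiased estimator P̂(x) = (1/(nλ)) ∑_{i=1}^n 1{Y_i = x}, where Y_1, …, Y_n are i.i.d. with distribution Q = W(P) (so Q(x) = λP(x) for x ∈ {1,…,k}), the expected squared ℓ2-error satisfies E‖P̂ − P‖_2^2 = (1/(nλ)) ∑_{x=1}^k P(x)(1 − λP(x)) ≤ (k−1)/(n(2^α − 1)) for every distribution P on {1,…,k}. -/
import Mathlib
open Finset
/-- `λ = (2^α − 1)/(k − 1)`. -/
noncomputable def lam (k : ℕ) (α : ℝ) : ℝ := ((2:ℝ) ^ α - 1) / ((k : ℝ) - 1)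

/-- The output distribution `Q = W(P)` on `{1,…,k+1}`: `Q(x) = λP(x)` for `x ≤ k`
and `Q(k+1) = 1 − λ`. -/
noncomputable def Qdist (k : ℕ) (α : ℝ) (P : Fin k → ℝ) : Fin (k + 1) → ℝ :=
  fun y => if h : (y : ℕ) < k then lam k α * P ⟨y, h⟩ else 1 - lam k α

/-- The unbiased estimator `P̂(x) = (1/(nλ)) ∑_i 1{Y_i = x}`. -/
noncomputable def Phat (k n : ℕ) (α : ℝ) (ys : Fin n → Fin (k + 1)) : Fin k → ℝ :=
  fun x => (1 / ((n : ℝ) * lam k α)) * ∑ i, if (ys i : ℕ) = (x : ℕ) then (1:ℝ) else 0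


lemma moment0 {A : Type*} [Fintype A] (μ : A → ℝ) (hμ : ∑ y, μ y = 1) :
    ∀ n : ℕ, ∑ ys : Fin n → A, (∏ i, μ (ys i)) = 1 := by
  intro n
  induction n with
  | zero => simp
  | succ m ih =>
    rw [← Equiv.sum_comp (Fin.consEquiv (fun _ => A)), Fintype.sum_prod_type]
    simp only [Fin.consEquiv_apply, Fin.prod_univ_succ, Fin.cons_zero, Fin.cons_succ]
    simp_rw [← Finset.mul_sum, ih, mul_one, hμ]

lemma moment1 {A : Type*} [Fintype A] (μ g : A → ℝ) (hμ : ∑ y, μ y = 1) :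
    ∀ n : ℕ, ∑ ys : Fin n → A, (∏ i, μ (ys i)) * (∑ i, g (ys i))
      = n * ∑ y, μ y * g y := by
  intro n
  induction n with
  | zero => simp
  | succ m ih =>
    rw [← Equiv.sum_comp (Fin.consEquiv (fun _ => A)), Fintype.sum_prod_type]
    simp only [Fin.consEquiv_apply, Fin.prod_univ_succ, Fin.sum_univ_succ,
      Fin.cons_zero, Fin.cons_succ]
    have : ∀ a : A, ∑ ys : Fin m → A,
        (μ a * ∏ i, μ (ys i)) * (g a + ∑ i, g (ys i))
        = μ a * g a + μ a * ((m : ℝ) * ∑ y, μ y * g y) := by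
      intro a
      have : ∀ ys : Fin m → A,
          (μ a * ∏ i, μ (ys i)) * (g a + ∑ i, g (ys i))
          = μ a * g a * (∏ i, μ (ys i)) + μ a * ((∏ i, μ (ys i)) * ∑ i, g (ys i)) := by
        intro ys; ring
      simp_rw [this, Finset.sum_add_distrib, ← Finset.mul_sum, moment0 μ hμ m, ih, mul_one]
    simp_rw [this, Finset.sum_add_distrib]
    rw [← Finset.sum_mul, hμ, one_mul]
    push_cast
    ring

lemma moment2 {A : Type*} [Fintype A] (μ g : A → ℝ) (hμ : ∑ y, μ y = 1) :
    ∀ n : ℕ, ∑ ys : Fin n → A, (∏ i, μ (ys i)) * (∑ i, g (ys i)) ^ 2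
      = n * ∑ y, μ y * (g y) ^ 2 + (n : ℝ) * ((n : ℝ) - 1) * (∑ y, μ y * g y) ^ 2 := by
  intro n
  induction n with
  | zero => simp
  | succ m ih =>
    rw [← Equiv.sum_comp (Fin.consEquiv (fun _ => A)), Fintype.sum_prod_type]
    simp only [Fin.consEquiv_apply, Fin.prod_univ_succ, Fin.sum_univ_succ,
      Fin.cons_zero, Fin.cons_succ]
    have key : ∀ a : A, ∑ ys : Fin m → A,
        (μ a * ∏ i, μ (ys i)) * (g a + ∑ i, g (ys i)) ^ 2
        = μ a * (g a ^ 2) + 2 * (μ a * g a) * ((m : ℝ) * ∑ y, μ y * g y)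
          + μ a * ((m : ℝ) * ∑ y, μ y * (g y) ^ 2
            + (m : ℝ) * ((m : ℝ) - 1) * (∑ y, μ y * g y) ^ 2) := by
      intro a
      have h1 : ∀ ys : Fin m → A,
          (μ a * ∏ i, μ (ys i)) * (g a + ∑ i, g (ys i)) ^ 2
          = μ a * g a ^ 2 * (∏ i, μ (ys i))
            + 2 * (μ a * g a) * ((∏ i, μ (ys i)) * ∑ i, g (ys i))
            + μ a * ((∏ i, μ (ys i)) * (∑ i, g (ys i)) ^ 2) := by
        intro ys; ring
      simp_rw [h1, Finset.sum_add_distrib, ← Finset.mul_sum, moment0 μ hμ m,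
        moment1 μ g hμ m, ih, mul_one]
    simp_rw [key, Finset.sum_add_distrib]
    have e1 : ∑ a, μ a * g a ^ 2 = ∑ y, μ y * g y ^ 2 := rfl
    have e2 : ∑ a, 2 * (μ a * g a) * ((m : ℝ) * ∑ y, μ y * g y)
        = 2 * (m : ℝ) * (∑ y, μ y * g y) ^ 2 := by
      rw [← Finset.sum_mul]
      simp_rw [mul_comm (2:ℝ)]
      rw [← Finset.sum_mul]
      ring
    have e3 : ∑ a, μ a * ((m : ℝ) * ∑ y, μ y * (g y) ^ 2
        + (m : ℝ) * ((m : ℝ) - 1) * (∑ y, μ y * g y) ^ 2)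
        = (m : ℝ) * ∑ y, μ y * (g y) ^ 2
          + (m : ℝ) * ((m : ℝ) - 1) * (∑ y, μ y * g y) ^ 2 := by
      rw [← Finset.sum_mul, hμ, one_mul]
    rw [e2, e3]
    push_cast
    ring

/-- for `Y_1,…,Y_n` i.i.d. with law `Q = W(P)`, the expected squared
`ℓ₂`-error of the unbiased estimator equals `(1/(nλ)) ∑_x P(x)(1 − λP(x))`, which
is at most `(k−1)/(n(2^α − 1))`. -/
theorem stmt19 {k n : ℕ} (hk : 2 ≤ k) (hn : 1 ≤ n) (α : ℝ) (hα : 0 < α)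
    (hαk : (2:ℝ) ^ α ≤ (k : ℝ))
    (P : Fin k → ℝ) (hP : ∀ x, 0 ≤ P x) (hPs : ∑ x, P x = 1) :
    (∑ ys : Fin n → Fin (k + 1),
        (∏ i, Qdist k α P (ys i)) * (∑ x, (Phat k n α ys x - P x) ^ 2) =
      (1 / ((n : ℝ) * lam k α)) * ∑ x, P x * (1 - lam k α * P x)) ∧
    (1 / ((n : ℝ) * lam k α)) * ∑ x, P x * (1 - lam k α * P x) ≤
      ((k : ℝ) - 1) / ((n : ℝ) * ((2:ℝ) ^ α - 1)) := by
  have h2α : (1:ℝ) < (2:ℝ) ^ α := by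
    rw [show (2:ℝ) ^ α = (2:ℝ) ^ α from rfl]
    have := Real.one_lt_rpow_iff_of_pos (x := 2) (y := α) two_pos
    rw [this]; left; exact ⟨one_lt_two, hα⟩
  have hk1 : (0:ℝ) < (k:ℝ) - 1 := by
    have : (2:ℝ) ≤ (k:ℝ) := by exact_mod_cast hk
    linarith
  have hlam : 0 < lam k α := div_pos (by linarith) hk1
  have hnR : (0:ℝ) < (n:ℝ) := by exact_mod_cast hn
  have hne : (n:ℝ) ≠ 0 := ne_of_gt hnR
  have hlamne : lam k α ≠ 0 := ne_of_gt hlam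
  -- Q sums to 1
  have hμ : ∑ y, Qdist k α P y = 1 := by
    rw [Fin.sum_univ_castSucc]
    have h1 : ∀ x : Fin k, Qdist k α P (Fin.castSucc x) = lam k α * P x := by
      intro x
      simp only [Qdist, Fin.coe_castSucc]
      rw [dif_pos x.isLt]
    have h2 : Qdist k α P (Fin.last k) = 1 - lam k α := by
      simp only [Qdist, Fin.val_last]
      rw [dif_neg (lt_irrefl k)]
    simp_rw [h1, h2, ← Finset.mul_sum, hPs, mul_one]
    ring
  -- indicator function for x
  set μ := Qdist k α P with hμdef
  have hg : ∀ x : Fin k, ∑ y, μ y * (if (y : ℕ) = (x : ℕ) then (1:ℝ) else 0)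
      = lam k α * P x := by
    intro x
    have hc : ∀ y : Fin (k+1), ((y : ℕ) = (x : ℕ)) ↔ (y = Fin.castSucc x) := by
      intro y; constructor
      · intro h; exact Fin.ext (by simpa using h)
      · intro h; subst h; simp
    simp_rw [hc]
    simp_rw [mul_ite, mul_one, mul_zero]
    rw [Finset.sum_ite_eq' univ (Fin.castSucc x) μ]
    simp only [mem_univ, if_true]
    simp only [hμdef, Qdist, Fin.coe_castSucc]
    rw [dif_pos x.isLt]
  have hg2 : ∀ x : Fin k, ∑ y, μ y * (if (y : ℕ) = (x : ℕ) then (1:ℝ) else 0) ^ 2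
      = lam k α * P x := by
    intro x
    rw [← hg x]
    apply Finset.sum_congr rfl
    intro y _
    congr 1
    split <;> norm_num
  -- main computation
  constructor
  · -- swap sums
    have swap : ∑ ys : Fin n → Fin (k + 1),
        (∏ i, μ (ys i)) * (∑ x, (Phat k n α ys x - P x) ^ 2)
        = ∑ x, ∑ ys : Fin n → Fin (k + 1),
            (∏ i, μ (ys i)) * (Phat k n α ys x - P x) ^ 2 := by
      simp_rw [Finset.mul_sum]
      rw [Finset.sum_comm]
    rw [swap]
    have perx : ∀ x : Fin k, ∑ ys : Fin n → Fin (k + 1),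
        (∏ i, μ (ys i)) * (Phat k n α ys x - P x) ^ 2
        = (1 / ((n : ℝ) * lam k α)) * (P x * (1 - lam k α * P x)) := by
      intro x
      set c : ℝ := 1 / ((n : ℝ) * lam k α) with hc
      set g : Fin (k+1) → ℝ := fun y => if (y : ℕ) = (x : ℕ) then (1:ℝ) else 0 with hgdef
      have step1 : ∑ ys : Fin n → Fin (k + 1),
          (∏ i, μ (ys i)) * (Phat k n α ys x - P x) ^ 2
          = c ^ 2 * (∑ ys : Fin n → Fin (k+1), (∏ i, μ (ys i)) * (∑ i, g (ys i)) ^ 2)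
            - 2 * c * P x * (∑ ys : Fin n → Fin (k+1), (∏ i, μ (ys i)) * (∑ i, g (ys i)))
            + (P x) ^ 2 * (∑ ys : Fin n → Fin (k+1), (∏ i, μ (ys i))) := by
        rw [Finset.mul_sum, Finset.mul_sum, Finset.mul_sum, ← Finset.sum_sub_distrib,
          ← Finset.sum_add_distrib]
        apply Finset.sum_congr rfl
        intro ys _
        simp only [Phat, hgdef, hc]
        ring
      rw [step1, moment0 μ hμ n, moment1 μ g hμ n, moment2 μ g hμ n]
      have hgsum : ∑ y, μ y * g y = lam k α * P x := hg x
      have hg2sum : ∑ y, μ y * (g y) ^ 2 = lam k α * P x := hg2 x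
      rw [hgsum, hg2sum, hc]
      field_simp
      ring
    rw [Finset.sum_congr rfl (fun x _ => perx x), ← Finset.mul_sum]
  · -- inequality
    have hbound : ∑ x, P x * (1 - lam k α * P x) ≤ 1 := by
      rw [← hPs]
      apply Finset.sum_le_sum
      intro x _
      nlinarith [hP x, hlam.le, mul_nonneg hlam.le (hP x)]
    have hcpos : (0:ℝ) < 1 / ((n : ℝ) * lam k α) :=
      by positivity
    calc (1 / ((n : ℝ) * lam k α)) * ∑ x, P x * (1 - lam k α * P x)
        ≤ (1 / ((n : ℝ) * lam k α)) * 1 := by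
          exact mul_le_mul_of_nonneg_left hbound hcpos.le
      _ = ((k : ℝ) - 1) / ((n : ℝ) * ((2:ℝ) ^ α - 1)) := by
          rw [mul_one, lam]
          field_simp
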